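/- For discrete random variables T^v and T^l and any positive measurable function f, the NWJ lower bound holds: I(T^v; T^l) ≥ E_{p(t^v,t^l)}[log f(t^v,t^l)] − (1/e)·E_{p(t^v)p(t^l)}[f(t^v,t^l)]. -/

import Mathlib

/-!
Mutual information is the relative entropy `∑ J log (J / (Pᵛ Pˡ))` of the joint law `J` with
respect to the product of the marginals, and the bound holds term by term: multiplying
`log t ≤ t / e` at `t = f Pᵛ Pˡ / J` by `J` gives `J log f - f Pᵛ Pˡ / e ≤ J log (J / (Pᵛ Pˡ))`.
-/

open scoped BigOperators

/-- A probability distribution on a finite sample space. -/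
structure FinProb (Ω : Type) [Fintype Ω] where
  p : Ω → ℝ
  nonneg : ∀ ω, 0 ≤ p ω
  sum_one : ∑ ω, p ω = 1

/-- Probability that a discrete random variable `X` takes the value `a`. -/
noncomputable def probOf {Ω α : Type} [Fintype Ω] [Fintype α] [DecidableEq α]
    (μ : FinProb Ω) (X : Ω → α) (a : α) : ℝ :=
  ∑ ω, if X ω = a then μ.p ω else 0

/-- Shannon entropy of a discrete random variable. -/
noncomputable def entropy {Ω α : Type} [Fintype Ω] [Fintype α] [DecidableEq α]
    (μ : FinProb Ω) (X : Ω → α) : ℝ :=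
  ∑ a, Real.negMulLog (probOf μ X a)

/-- Conditional Shannon entropy `H(X|Y) = H(X,Y) - H(Y)`. -/
noncomputable def condEntropy {Ω α β : Type} [Fintype Ω] [Fintype α] [DecidableEq α]
    [Fintype β] [DecidableEq β] (μ : FinProb Ω) (X : Ω → α) (Y : Ω → β) : ℝ :=
  entropy μ (fun ω => (X ω, Y ω)) - entropy μ Y

/-- Mutual information `I(X;Z) = H(X) + H(Z) - H(X,Z)`. -/
noncomputable def mutualInfo {Ω α β : Type} [Fintype Ω] [Fintype α] [DecidableEq α]
    [Fintype β] [DecidableEq β] (μ : FinProb Ω) (X : Ω → α) (Z : Ω → β) : ℝ :=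
  entropy μ X + entropy μ Z - entropy μ (fun ω => (X ω, Z ω))

/-- Conditional mutual information `I(X;Z|Y) = H(X|Y) + H(Z|Y) - H(X,Z|Y)`. -/
noncomputable def condMutualInfo {Ω α β γ : Type} [Fintype Ω] [Fintype α] [DecidableEq α]
    [Fintype β] [DecidableEq β] [Fintype γ] [DecidableEq γ]
    (μ : FinProb Ω) (X : Ω → α) (Z : Ω → β) (Y : Ω → γ) : ℝ :=
  condEntropy μ X Y + condEntropy μ Z Y - condEntropy μ (fun ω => (X ω, Z ω)) Y

/-- Conditional probability `p(t|x)` of `T = t` given `X = x`. -/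
noncomputable def condProb {Ω α β : Type} [Fintype Ω] [Fintype α] [DecidableEq α]
    [Fintype β] [DecidableEq β] (μ : FinProb Ω) (T : Ω → β) (X : Ω → α) (t : β) (x : α) : ℝ :=
  probOf μ (fun ω => (T ω, X ω)) (t, x) / probOf μ X x

/-- Expected KL divergence `KL(p(t|x₁) ‖ q(t|x₂))` between two channels sharing a
representation space, averaged over the joint law of `(X₁, X₂)`. -/
noncomputable def klChannels {Ω α₁ α₂ γ : Type} [Fintype Ω] [Fintype α₁] [DecidableEq α₁]
    [Fintype α₂] [DecidableEq α₂] [Fintype γ] [DecidableEq γ] (μ : FinProb Ω)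
    (T₁ : Ω → γ) (X₁ : Ω → α₁) (T₂ : Ω → γ) (X₂ : Ω → α₂) : ℝ :=
  ∑ x : α₁ × α₂, probOf μ (fun ω => (X₁ ω, X₂ ω)) x *
    ∑ t : γ, condProb μ T₁ X₁ t x.1 *
      Real.log (condProb μ T₁ X₁ t x.1 / condProb μ T₂ X₂ t x.2)

open Finset Real

lemma probOf_nonneg {Ω α : Type} [Fintype Ω] [Fintype α] [DecidableEq α]
    (μ : FinProb Ω) (X : Ω → α) (a : α) : 0 ≤ probOf μ X a :=
  sum_nonneg fun ω _ => by split_ifs <;> simp [μ.nonneg ω]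

section Marginals

variable {Ω α β : Type} [Fintype Ω] [Fintype α] [DecidableEq α] [Fintype β] [DecidableEq β]
  (μ : FinProb Ω) (X : Ω → α) (Y : Ω → β)

lemma sum_probOf_pair_right (a : α) :
    ∑ b, probOf μ (fun ω => (X ω, Y ω)) (a, b) = probOf μ X a := by
  unfold probOf
  rw [sum_comm]
  refine sum_congr rfl fun ω _ => ?_
  by_cases h : X ω = a <;> simp [h, Prod.ext_iff]

lemma sum_probOf_pair_left (b : β) :
    ∑ a, probOf μ (fun ω => (X ω, Y ω)) (a, b) = probOf μ Y b := by
  unfold probOf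
  rw [sum_comm]
  refine sum_congr rfl fun ω _ => ?_
  by_cases h : Y ω = b <;> simp [h, Prod.ext_iff]

lemma probOf_pair_le_left (a : α) (b : β) :
    probOf μ (fun ω => (X ω, Y ω)) (a, b) ≤ probOf μ X a :=
  sum_probOf_pair_right μ X Y a ▸
    single_le_sum (fun b' _ => probOf_nonneg μ _ (a, b')) (mem_univ b)

lemma probOf_pair_le_right (a : α) (b : β) :
    probOf μ (fun ω => (X ω, Y ω)) (a, b) ≤ probOf μ Y b :=
  sum_probOf_pair_left μ X Y b ▸
    single_le_sum (fun a' _ => probOf_nonneg μ _ (a', b)) (mem_univ a)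

lemma probOf_pair_eq_zero_of_mul_eq_zero {a : α} {b : β}
    (h : probOf μ X a * probOf μ Y b = 0) : probOf μ (fun ω => (X ω, Y ω)) (a, b) = 0 := by
  refine le_antisymm ?_ (probOf_nonneg μ _ (a, b))
  rcases mul_eq_zero.1 h with h | h
  · exact h ▸ probOf_pair_le_left μ X Y a b
  · exact h ▸ probOf_pair_le_right μ X Y a b

lemma mutualInfo_eq_sum_mul_log_div :
    mutualInfo μ X Y = ∑ x : α × β, probOf μ (fun ω => (X ω, Y ω)) x *
      log (probOf μ (fun ω => (X ω, Y ω)) x / (probOf μ X x.1 * probOf μ Y x.2)) := by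
  set J := probOf μ (fun ω => (X ω, Y ω))
  have hX : entropy μ X = -∑ x : α × β, J x * log (probOf μ X x.1) := by
    simp only [entropy, negMulLog, Fintype.sum_prod_type, ← sum_mul, J,
      sum_probOf_pair_right, neg_mul, sum_neg_distrib]
  have hY : entropy μ Y = -∑ x : α × β, J x * log (probOf μ Y x.2) := by
    simp only [entropy, negMulLog, Fintype.sum_prod_type_right, ← sum_mul, J,
      sum_probOf_pair_left, neg_mul, sum_neg_distrib]
  have hXY : entropy μ (fun ω => (X ω, Y ω)) = -∑ x : α × β, J x * log (J x) := by
    simp only [entropy, negMulLog, neg_mul, sum_neg_distrib, J]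
  rw [mutualInfo, hX, hY, hXY, sub_neg_eq_add, ← sum_neg_distrib, ← sum_neg_distrib,
    ← sum_add_distrib, ← sum_add_distrib]
  refine sum_congr rfl fun x _ => ?_
  rcases (probOf_nonneg μ _ x : 0 ≤ J x).eq_or_lt with hJ | hJ
  · rw [show J x = 0 from hJ.symm]; simp
  have hPX := hJ.trans_le (probOf_pair_le_left μ X Y x.1 x.2)
  have hPY := hJ.trans_le (probOf_pair_le_right μ X Y x.1 x.2)
  rw [log_div hJ.ne' (by positivity), log_mul hPX.ne' hPY.ne']
  ring

end Marginals

lemma log_le_div_exp_one {x : ℝ} (hx : 0 < x) : log x ≤ x / exp 1 := by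
  have := log_le_sub_one_of_pos (div_pos hx (exp_pos 1))
  rw [log_div hx.ne' (exp_pos 1).ne', log_exp] at this
  linarith

lemma mul_log_sub_mul_div_exp_one_le {p q c : ℝ} (hp : 0 ≤ p) (hq : 0 ≤ q)
    (hpq : q = 0 → p = 0) (hc : 0 < c) :
    p * log c - q * c / exp 1 ≤ p * log (p / q) := by
  rcases hp.eq_or_lt with rfl | hp
  · simp only [zero_mul, zero_sub, neg_nonpos]
    positivity
  have hq : 0 < q := hq.lt_of_ne fun h => hp.ne' (hpq h.symm)
  calc p * log c - q * c / exp 1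
      = p * log (c / (p / q)) + p * log (p / q) - q * c / exp 1 := by
        rw [log_div hc.ne' (by positivity)]; ring
    _ ≤ p * (c / (p / q) / exp 1) + p * log (p / q) - q * c / exp 1 := by
        gcongr; exact log_le_div_exp_one (by positivity)
    _ = p * log (p / q) := by field_simp; ring

lemma sum_mul_log_sub_div_exp_one_le {ι : Type} (s : Finset ι) {p q g : ι → ℝ}
    (hp : ∀ i, 0 ≤ p i) (hq : ∀ i, 0 ≤ q i) (hpq : ∀ i, q i = 0 → p i = 0)
    (hg : ∀ i, 0 < g i) :
    ∑ i ∈ s, p i * log (g i) - 1 / exp 1 * ∑ i ∈ s, q i * g i ≤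
      ∑ i ∈ s, p i * log (p i / q i) := by
  rw [mul_sum, ← sum_sub_distrib]
  refine sum_le_sum fun i _ => ?_
  rw [one_div_mul_eq_div]
  exact mul_log_sub_mul_div_exp_one_le (hp i) (hq i) (hpq i) (hg i)

/-- NWJ (Nguyen–Wainwright–Jordan) variational lower bound: for any strictly positive
critic `f`, `I(Tᵛ;Tˡ) ≥ E_{p(tᵛ,tˡ)}[log f] − (1/e)·E_{p(tᵛ)p(tˡ)}[f]`. -/
theorem nwj_lower_bound {Ω α β : Type} [Fintype Ω]
    [Fintype α] [DecidableEq α] [Fintype β] [DecidableEq β]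
    (μ : FinProb Ω) (Tv : Ω → α) (Tl : Ω → β)
    (f : α → β → ℝ) (hf : ∀ a b, 0 < f a b) :
    mutualInfo μ Tv Tl ≥
      (∑ a, ∑ b, probOf μ (fun ω => (Tv ω, Tl ω)) (a, b) * Real.log (f a b)) -
        (1 / Real.exp 1) * ∑ a, ∑ b, probOf μ Tv a * probOf μ Tl b * f a b := by
  rw [ge_iff_le, mutualInfo_eq_sum_mul_log_div, ← Fintype.sum_prod_type',
    ← Fintype.sum_prod_type']
  exact sum_mul_log_sub_div_exp_one_le univ (fun x => probOf_nonneg μ _ x)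
    (fun x => mul_nonneg (probOf_nonneg μ Tv x.1) (probOf_nonneg μ Tl x.2))
    (fun x => probOf_pair_eq_zero_of_mul_eq_zero μ Tv Tl) (fun x => hf x.1 x.2)
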